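/- arXiv:1609.05018 — 2 statements merged into one kernel-verified Lean document; each statement's English description precedes it below -/
import Mathlib

section
/- Let k ≥ 2, let g ∈ ℂ with |arg g| ≤ (k−1)π/(4k), and let y ∈ ℂ be nonzero with Re y ≤ 0. Then for either square root w of y, the argument of g·w lies in [π/(4k), π − π/(4k)] ∪ [−π + π/(4k), −π/(4k)], and consequently |1 ± g·w| ≥ sin(π/(4k)). -/
/-!
Write `α = π/(4k)`, so that `|arg g| ≤ π/4 - α`. Since `Re (w²) = ‖w‖² cos (2 arg w) ≤ 0`, the
square root `w` satisfies `π/4 ≤ |arg w| ≤ 3π/4`; adding `arg g` keeps the sum in `(-π, π)`, hence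
`α ≤ |arg (g w)| ≤ π - α` and `|Re (g w)| ≤ ‖g w‖ cos α`. Then
`‖1 ± g w‖² ≥ 1 - 2 ‖g w‖ cos α + ‖g w‖² = (‖g w‖ - cos α)² + sin² α`.
-/

open Real Complex Set

theorem Real.mem_Icc_of_cos_two_mul_nonpos {x : ℝ} (h₀ : 0 ≤ x) (hπ : x ≤ π)
    (hcos : cos (2 * x) ≤ 0) : x ∈ Icc (π / 4) (3 * π / 4) := by
  constructor
  · by_contra! hx
    have : 0 < cos (2 * x) := cos_pos_of_mem_Ioo ⟨by linarith, by linarith⟩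
    linarith
  · by_contra! hx
    have : 0 < cos (2 * x - 2 * π) := cos_pos_of_mem_Ioo ⟨by linarith, by linarith⟩
    rw [cos_sub_two_pi] at this
    linarith

theorem Real.abs_cos_le_cos_of_abs_mem_Icc {θ α : ℝ} (hα : 0 ≤ α) (hθ : |θ| ∈ Icc α (π - α)) :
    |cos θ| ≤ cos α := by
  rw [← cos_abs θ, abs_le]
  constructor
  · have := cos_le_cos_of_nonneg_of_le_pi (abs_nonneg θ) (by linarith) hθ.2
    rwa [cos_pi_sub] at this
  · exact cos_le_cos_of_nonneg_of_le_pi hα (by linarith [hθ.2]) hθ.1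

namespace Complex

theorem re_sq_eq_sq_norm_mul_cos_two_mul_arg (w : ℂ) :
    (w ^ 2).re = ‖w‖ ^ 2 * Real.cos (2 * w.arg) := by
  rw [Real.cos_two_mul', sq w, mul_re, ← norm_mul_cos_arg w, ← norm_mul_sin_arg w]
  ring

theorem abs_arg_mem_Icc_of_re_sq_nonpos {w : ℂ} (hw : w ≠ 0) (hre : (w ^ 2).re ≤ 0) :
    |w.arg| ∈ Icc (π / 4) (3 * π / 4) := by
  apply Real.mem_Icc_of_cos_two_mul_nonpos (abs_nonneg _) (abs_arg_le_pi w)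
  rw [← abs_two, ← abs_mul, Real.cos_abs]
  rw [re_sq_eq_sq_norm_mul_cos_two_mul_arg] at hre
  exact nonpos_of_mul_nonpos_right hre (by positivity)

theorem abs_arg_mul_mem_Icc {g w : ℂ} {α : ℝ} (hα : 0 < α) (hg₀ : g ≠ 0) (hw₀ : w ≠ 0)
    (hg : |g.arg| ≤ π / 4 - α) (hw : |w.arg| ∈ Icc (π / 4) (3 * π / 4)) :
    |(g * w).arg| ∈ Icc α (π - α) := by
  have hle : |g.arg + w.arg| ≤ π - α := by linarith [abs_add_le g.arg w.arg, hw.2]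
  rw [arg_mul hg₀ hw₀ ⟨by linarith [(abs_le.mp hle).1], by linarith [(abs_le.mp hle).2]⟩]
  refine ⟨?_, hle⟩
  have := abs_sub_abs_le_abs_add w.arg g.arg
  rw [add_comm] at this
  linarith [hw.1]

theorem abs_sin_le_norm_one_add {z : ℂ} {α : ℝ} (hre : -(‖z‖ * Real.cos α) ≤ z.re) :
    |Real.sin α| ≤ ‖1 + z‖ := by
  have hsq : ‖1 + z‖ ^ 2 = 1 + 2 * z.re + ‖z‖ ^ 2 := by
    rw [Complex.sq_norm, Complex.sq_norm, normSq_add, normSq_one, one_mul, conj_re]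
    ring
  have key : Real.sin α ^ 2 ≤ ‖1 + z‖ ^ 2 := by
    rw [hsq]
    nlinarith [sq_nonneg (‖z‖ - Real.cos α), Real.sin_sq_add_cos_sq α]
  simpa using sq_le_sq.mp key

end Complex

/-- for `k ≥ 2`, `g ≠ 0` with `|arg g| ≤ (k−1)π/(4k)` and `y ≠ 0` with
`Re y ≤ 0`, for either square root `w` of `y` the argument of `g·w` lies in
`[π/(4k), π − π/(4k)] ∪ [−π + π/(4k), −π/(4k)]`, and `|1 ± g·w| ≥ sin(π/(4k))`. -/
theorem arg_g_sqrt_and_dist_bound (k : ℕ) (hk : 2 ≤ k) (g : ℂ) (hg : g ≠ 0)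
    (harg : |g.arg| ≤ (k - 1) * Real.pi / (4 * k))
    (y w : ℂ) (hy : y ≠ 0) (hre : y.re ≤ 0) (hw : w ^ 2 = y) :
    ((Real.pi / (4 * k) ≤ (g * w).arg ∧ (g * w).arg ≤ Real.pi - Real.pi / (4 * k)) ∨
      (-(Real.pi - Real.pi / (4 * k)) ≤ (g * w).arg ∧ (g * w).arg ≤ -(Real.pi / (4 * k)))) ∧
    (∀ s : ℂ, s = 1 ∨ s = -1 → Real.sin (Real.pi / (4 * k)) ≤ ‖1 + s * (g * w)‖) := by
  have hk₀ : (0 : ℝ) < k := Nat.cast_pos.mpr (by omega)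
  set α := π / (4 * k) with hα
  have hα₀ : 0 < α := by positivity
  have hg' : |g.arg| ≤ π / 4 - α := by
    convert harg using 1
    rw [hα]
    field_simp
  have hw₀ : w ≠ 0 := by rintro rfl; simp_all
  have hgw := abs_arg_mul_mem_Icc hα₀ hg hw₀ hg'
    (abs_arg_mem_Icc_of_re_sq_nonpos hw₀ (hw ▸ hre))
  refine ⟨?_, fun s hs ↦ ?_⟩
  · rcases abs_cases (g * w).arg with ⟨h, -⟩ | ⟨h, -⟩ <;> rw [h] at hgw
    · exact .inl hgw
    · exact .inr ⟨by linarith [hgw.2], by linarith [hgw.1]⟩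
  · have hcos := Real.abs_cos_le_cos_of_abs_mem_Icc hα₀.le hgw
    have hre' : |(g * w).re| ≤ ‖g * w‖ * Real.cos α := by
      rw [← norm_mul_cos_arg, abs_mul, abs_norm]
      exact mul_le_mul_of_nonneg_left hcos (norm_nonneg _)
    refine (le_abs_self _).trans (abs_sin_le_norm_one_add ?_)
    rcases hs with rfl | rfl <;> simp only [one_mul, neg_one_mul, norm_neg, neg_re] <;>
      linarith [abs_le.mp hre']
end

section
/- Let k ≥ 2, N ≥ 1, and let H be an N×N Hermitian matrix, B an N×N complex matrix, η ∈ {0,1}, and 𝕄 the (k+1)N×(k+1)N bordered block matrix such that det((1−x)𝟙 − g𝕄) = (1−x)^{(k−1)N} det((1−x)²𝟙_N − g²(iH − ηBB†)). If g ∈ ℂ satisfies |arg(g)| ≤ (k−1)π/(4k), then every eigenvalue of 𝟙_{(k+1)N} − g𝕄 has modulus at least sin(π/(4k)); in particular 𝟙 − g𝕄 is invertible. -/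
/-!
If `μ ≠ 1` is an eigenvalue of `𝟙 − g𝕄`, the determinant identity gives `(1 − μ)² = g² y` for an
eigenvalue `y` of `iH − ηBB†`, whose numerical range lies in the closed left half-plane. Since
`|arg g²| ≤ π/2 − π/(2k)`, the number `(1 − μ)²` then avoids the open sector `|arg| < π/(2k)`,
so `1 − μ` avoids the double cone `|arg (±z)| < π/(4k)`, whose complement is at distance
`sin (π/(4k))` from `1`.
-/

open Matrix Real
open scoped ComplexOrder

lemma re_star_dotProduct_mulVec_nonpos {n : Type*} [Fintype n]
    {H P : Matrix n n ℂ} (hH : H.IsHermitian) (hP : P.PosSemidef) {η : ℝ} (hη : 0 ≤ η)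
    (v : n → ℂ) : (star v ⬝ᵥ ((Complex.I • H - (η : ℂ) • P) *ᵥ v)).re ≤ 0 := by
  have hHv : (star v ⬝ᵥ (H *ᵥ v)).im = 0 := hH.im_star_dotProduct_mulVec_self v
  have hPv : 0 ≤ (star v ⬝ᵥ (P *ᵥ v)).re :=
    (Complex.nonneg_iff.mp (hP.dotProduct_mulVec_nonneg v)).1
  simp only [sub_mulVec, smul_mulVec, dotProduct_sub, dotProduct_smul, smul_eq_mul,
    Complex.sub_re, Complex.mul_re, Complex.I_re, Complex.I_im, Complex.ofReal_re,
    Complex.ofReal_im, hHv]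
  nlinarith [mul_nonneg hη hPv]

lemma exists_re_nonpos_eq_mul_of_det_eq_zero {n : Type*} [Fintype n] [DecidableEq n]
    {A : Matrix n n ℂ} (hA : ∀ v, (star v ⬝ᵥ (A *ᵥ v)).re ≤ 0) {w c : ℂ}
    (hdet : (w • (1 : Matrix n n ℂ) - c • A).det = 0) : ∃ y : ℂ, y.re ≤ 0 ∧ w = c * y := by
  obtain ⟨v, hv0, hv⟩ := exists_mulVec_eq_zero_iff.mpr hdet
  obtain ⟨hr, hi⟩ := Complex.pos_iff.mp (dotProduct_star_self_pos_iff.mpr hv0)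
  set r := (star v ⬝ᵥ v).re
  have hvv : star v ⬝ᵥ v = r := Complex.ext rfl hi.symm
  have hwr : w * r = c * (star v ⬝ᵥ (A *ᵥ v)) := by
    rw [sub_mulVec, smul_mulVec, smul_mulVec, one_mulVec, sub_eq_zero] at hv
    simpa [dotProduct_smul, hvv] using congrArg (star v ⬝ᵥ ·) hv
  refine ⟨star v ⬝ᵥ (A *ᵥ v) / r, ?_, ?_⟩
  · rw [Complex.div_ofReal_re]
    exact div_nonpos_of_nonpos_of_nonneg (hA v) hr.le
  · rw [mul_div_assoc', ← hwr, mul_div_cancel_right₀ _ (Complex.ofReal_ne_zero.mpr hr.ne')]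

lemma norm_mul_sin_le_re_sq {g : ℂ} {θ : ℝ} (hθ : 0 ≤ θ) (harg : |g.arg| ≤ π / 4 - θ) :
    ‖g ^ 2‖ * sin (2 * θ) ≤ (g ^ 2).re := by
  have hcos : sin (2 * θ) ≤ cos (2 * g.arg) := by
    rw [← cos_pi_div_two_sub, ← cos_abs (2 * g.arg)]
    apply cos_le_cos_of_nonneg_of_le_pi (abs_nonneg _) (by linarith [pi_pos])
    rw [abs_mul, abs_two]; linarith
  have hg2 : (g ^ 2).re = ‖g‖ ^ 2 * cos (2 * g.arg) := by
    rw [cos_two_mul', pow_two g, Complex.mul_re, ← Complex.norm_mul_cos_arg g,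
      ← Complex.norm_mul_sin_arg g]
    ring
  rw [hg2, norm_pow]
  exact mul_le_mul_of_nonneg_left hcos (by positivity)

lemma re_mul_le_norm_mul_cos {a t : ℂ} {α : ℝ} (hα₀ : 0 ≤ α) (hα : α ≤ π / 2)
    (ha : ‖a‖ * sin α ≤ a.re) (ht : t.re ≤ 0) : (a * t).re ≤ ‖a * t‖ * cos α := by
  have hs : 0 ≤ sin α := sin_nonneg_of_nonneg_of_le_pi hα₀ (by linarith [pi_pos])
  have hc : 0 ≤ cos α := cos_nonneg_of_mem_Icc ⟨by linarith [pi_pos], hα⟩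
  have hre : 0 ≤ a.re := (mul_nonneg (norm_nonneg a) hs).trans ha
  have him : |a.im| ≤ ‖a‖ * cos α := by
    rw [← abs_of_nonneg (mul_nonneg (norm_nonneg a) hc), ← sq_le_sq]
    have := Complex.sq_norm a
    rw [Complex.normSq_apply] at this
    nlinarith [sin_sq_add_cos_sq α, mul_nonneg (norm_nonneg a) hs]
  calc (a * t).re = a.re * t.re - a.im * t.im := Complex.mul_re a t
    _ ≤ |a.im| * |t.im| := by
        nlinarith [mul_nonpos_of_nonneg_of_nonpos hre ht, neg_abs_le (a.im * t.im),
          abs_mul a.im t.im]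
    _ ≤ ‖a‖ * cos α * ‖t‖ :=
        mul_le_mul him (Complex.abs_im_le_norm t) (abs_nonneg _) (by positivity)
    _ = ‖a * t‖ * cos α := by rw [norm_mul]; ring

lemma sin_le_norm_one_sub {z : ℂ} {θ : ℝ} (hθ₀ : 0 ≤ θ) (hθ : θ ≤ π / 2)
    (hz : (z ^ 2).re ≤ ‖z ^ 2‖ * cos (2 * θ)) : sin θ ≤ ‖1 - z‖ := by
  set s := sin θ
  set c := cos θ
  have hs : 0 ≤ s := sin_nonneg_of_nonneg_of_le_pi hθ₀ (by linarith [pi_pos])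
  have hc : 0 ≤ c := cos_nonneg_of_mem_Icc ⟨by linarith [pi_pos], hθ⟩
  have hsc : s ^ 2 + c ^ 2 = 1 := sin_sq_add_cos_sq θ
  have hre : (z ^ 2).re = z.re ^ 2 - z.im ^ 2 := by rw [pow_two z, Complex.mul_re]; ring
  have hnorm : ‖z ^ 2‖ = z.re ^ 2 + z.im ^ 2 := by
    rw [norm_pow, Complex.sq_norm, Complex.normSq_apply]; ring
  rw [hre, hnorm, cos_two_mul', ← sub_nonneg] at hz
  have hcone : s * z.re ≤ c * |z.im| := by
    have hsq : (s * z.re) ^ 2 ≤ (c * z.im) ^ 2 := by nlinarith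
    rw [← abs_of_nonneg hc, ← abs_mul]
    exact (le_abs_self _).trans (sq_le_sq.mp hsq)
  -- Cauchy–Schwarz against `(s, c)`, since `(1 - z.re) * s + |z.im| * c ≥ s` by `hcone`.
  have hdist : s ^ 2 ≤ ‖1 - z‖ ^ 2 := by
    rw [Complex.sq_norm, Complex.normSq_apply]
    simp only [Complex.sub_re, Complex.one_re, Complex.sub_im, Complex.one_im, zero_sub]
    nlinarith [sq_nonneg ((1 - z.re) * c - |z.im| * s), sq_abs z.im]
  exact (pow_le_pow_iff_left₀ hs (norm_nonneg _) two_ne_zero).mp hdist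

lemma det_sub_eq_zero_of_mem_spectrum_one_sub {n K : Type*} [Fintype n] [DecidableEq n] [Field K]
    {M : Matrix n n K} {μ : K} (hμ : μ ∈ spectrum K (1 - M)) :
    ((1 - μ) • (1 : Matrix n n K) - M).det = 0 := by
  rw [spectrum.mem_iff, isUnit_iff_isUnit_det, isUnit_iff_ne_zero, not_not,
    Algebra.algebraMap_eq_smul_one] at hμ
  have : (1 - μ) • (1 : Matrix n n K) - M = -(μ • 1 - (1 - M)) := by module
  rw [this, det_neg, hμ, mul_zero]

theorem eigenvalues_one_sub_gM_lower_bound_general (k N : ℕ) (hk : 2 ≤ k)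
    (H B : Matrix (Fin N) (Fin N) ℂ) (hH : H.IsHermitian) (η : ℝ) (hη : η = 0 ∨ η = 1)
    (𝕄 : Matrix (Fin N ⊕ Fin k × Fin N) (Fin N ⊕ Fin k × Fin N) ℂ)
    (g : ℂ) (harg : |g.arg| ≤ (k - 1) * Real.pi / (4 * k))
    (hdet : ∀ x : ℂ,
      ((1 - x) • (1 : Matrix (Fin N ⊕ Fin k × Fin N) (Fin N ⊕ Fin k × Fin N) ℂ)
          - g • 𝕄).det
        = (1 - x) ^ ((k - 1) * N) *
          ((1 - x) ^ 2 • (1 : Matrix (Fin N) (Fin N) ℂ)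
            - g ^ 2 • (Complex.I • H - (η : ℂ) • (B * Bᴴ))).det) :
    (∀ μ ∈ spectrum ℂ
        ((1 : Matrix (Fin N ⊕ Fin k × Fin N) (Fin N ⊕ Fin k × Fin N) ℂ) - g • 𝕄),
      Real.sin (Real.pi / (4 * k)) ≤ ‖μ‖) ∧
    IsUnit ((1 : Matrix (Fin N ⊕ Fin k × Fin N) (Fin N ⊕ Fin k × Fin N) ℂ) - g • 𝕄) := by
  have hk₀ : (0 : ℝ) < k := by positivity
  set θ := π / (4 * k)
  have hθ₀ : 0 < θ := by positivity
  have hθ : θ ≤ π / 4 := div_le_div_of_nonneg_left pi_pos.le (by norm_num) (by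
    norm_cast; omega)
  have harg' : |g.arg| ≤ π / 4 - θ := harg.trans_eq (by simp only [θ]; field_simp)
  have hη₀ : 0 ≤ η := by rcases hη with h | h <;> simp [h]
  have hA := re_star_dotProduct_mulVec_nonpos hH (posSemidef_self_mul_conjTranspose B) hη₀
  have hspec : ∀ μ ∈ spectrum ℂ (1 - g • 𝕄), sin θ ≤ ‖μ‖ := by
    intro μ hμ
    have hμdet := det_sub_eq_zero_of_mem_spectrum_one_sub hμ
    rw [hdet] at hμdet
    rcases mul_eq_zero.mp hμdet with hμ1 | hsq
    · rw [← sub_eq_zero.mp (eq_zero_of_pow_eq_zero hμ1), norm_one]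
      exact sin_le_one θ
    · obtain ⟨y, hy, hμy⟩ := exists_re_nonpos_eq_mul_of_det_eq_zero hA hsq
      have hcone := re_mul_le_norm_mul_cos (by positivity) (by linarith)
        (norm_mul_sin_le_re_sq hθ₀.le harg') hy
      rw [← hμy] at hcone
      simpa using sin_le_norm_one_sub hθ₀.le (by linarith) hcone
  refine ⟨hspec, by_contra fun hnu => ?_⟩
  have h0 := hspec 0 (spectrum.zero_mem ℂ hnu)
  rw [norm_zero] at h0
  exact (sin_pos_of_pos_of_lt_pi hθ₀ (by linarith [pi_pos])).not_ge h0

/-- if `𝕄` is the `(k+1)N × (k+1)N` bordered block matrix whose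
characteristic polynomial factorizes through `iH − ηBB†` with `H` Hermitian and
`η ∈ {0,1}`, and `|arg g| ≤ (k−1)π/(4k)`, then every eigenvalue of `𝟙 − g𝕄` has
modulus at least `sin(π/(4k))`; in particular `𝟙 − g𝕄` is invertible. -/
theorem eigenvalues_one_sub_gM_lower_bound (k N : ℕ) (hk : 2 ≤ k) (hN : 1 ≤ N)
    (H B : Matrix (Fin N) (Fin N) ℂ) (hH : H.IsHermitian) (η : ℝ) (hη : η = 0 ∨ η = 1)
    (𝕄 : Matrix (Fin N ⊕ Fin k × Fin N) (Fin N ⊕ Fin k × Fin N) ℂ)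
    (g : ℂ) (harg : |g.arg| ≤ (k - 1) * Real.pi / (4 * k))
    (hdet : ∀ x : ℂ,
      ((1 - x) • (1 : Matrix (Fin N ⊕ Fin k × Fin N) (Fin N ⊕ Fin k × Fin N) ℂ)
          - g • 𝕄).det
        = (1 - x) ^ ((k - 1) * N) *
          ((1 - x) ^ 2 • (1 : Matrix (Fin N) (Fin N) ℂ)
            - g ^ 2 • (Complex.I • H - (η : ℂ) • (B * Bᴴ))).det) :
    (∀ μ ∈ spectrum ℂ
        ((1 : Matrix (Fin N ⊕ Fin k × Fin N) (Fin N ⊕ Fin k × Fin N) ℂ) - g • 𝕄),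
      Real.sin (Real.pi / (4 * k)) ≤ ‖μ‖) ∧
    IsUnit ((1 : Matrix (Fin N ⊕ Fin k × Fin N) (Fin N ⊕ Fin k × Fin N) ℂ) - g • 𝕄) :=
  eigenvalues_one_sub_gM_lower_bound_general k N hk H B hH η hη 𝕄 g harg hdet
end
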